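/- arXiv:1212.5877 — 2 statements merged into one kernel-verified Lean document; each statement's English description precedes it below -/
import Mathlib

section
/- If M is totally unimodular and b is an integer vector, then every vertex (extreme point) of the polyhedron P = {x : Mx = b, x ≥ 0} has all integer coordinates. -/
/-!
Let `x` be a vertex of `P = {x | M x = b, x ≥ 0}` and `S` its support. A vector `d ≠ 0` in the
kernel of `M` vanishing off `S` would make `x` the midpoint of the two points `x ± ε d` of `P`,
so the columns of `M` indexed by `S` are linearly independent. Some square submatrix `Q` of these
columns is then invertible, hence `|det Q| = 1` by total unimodularity, and Cramer's rule writes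
`x` restricted to `S` as `det Q` times determinants of integer matrices.
-/

open Filter Matrix Set Topology

theorem eventually_nonneg_add_smul {n : Type*} [Finite n] {x d : n → ℝ} (hx : 0 ≤ x)
    (hd : ∀ j, x j = 0 → d j = 0) : ∀ᶠ t in 𝓝 (0 : ℝ), 0 ≤ x + t • d := by
  refine eventually_all.2 fun j => ?_
  rcases (hx j).eq_or_lt with hj | hj
  · exact .of_forall fun t => by simp [← hj, hd j hj.symm]
  · have hcont : Tendsto (fun t : ℝ => x j + t * d j) (𝓝 0) (𝓝 (x j)) :=
      Continuous.tendsto' (by fun_prop) _ _ (by simp)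
    exact hcont.eventually (eventually_ge_nhds hj)

theorem mem_extremePoints_of_forall_eq {E : Type*} [AddCommGroup E] [Module ℝ E] {A : Set E}
    {x : E} (hx : x ∈ A)
    (h : ∀ y ∈ A, ∀ z ∈ A, ∀ θ : ℝ, θ ∈ Ioo (0 : ℝ) 1 → x = θ • y + (1 - θ) • z → y = z) :
    x ∈ A.extremePoints ℝ := by
  refine ⟨hx, fun y hy z hz ⟨a, b, ha, hb, hab, hxyz⟩ => ?_⟩
  obtain rfl : y = z :=
    h y hy z hz a ⟨ha, by linarith⟩ (by rw [← hxyz, ← hab, add_sub_cancel_left])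
  rw [← hxyz, ← add_smul, hab, one_smul]

namespace Matrix

section Polyhedron

variable {m n : Type*} [Fintype n]

theorem linearCombination_col_eq_mulVec {R : Type*} [CommSemiring R] (M : Matrix m n R)
    (l : n →₀ R) : Finsupp.linearCombination R M.col l = M *ᵥ l := by
  rw [Finsupp.linearCombination_apply, Finsupp.sum_fintype _ _ (by simp)]
  ext i
  simp [mulVec, dotProduct, mul_comm]

variable {M : Matrix m n ℝ} {b : m → ℝ} {x : n → ℝ}

theorem eq_zero_of_mulVec_eq_zero_of_mem_extremePoints
    (hx : x ∈ {x | M *ᵥ x = b ∧ 0 ≤ x}.extremePoints ℝ) {d : n → ℝ} (hd : M *ᵥ d = 0)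
    (hsupp : ∀ j, x j = 0 → d j = 0) : d = 0 := by
  obtain ⟨⟨hxb, hx0⟩, hext⟩ := hx
  obtain ⟨ε, hε, hball⟩ := Metric.eventually_nhds_iff.1 (eventually_nonneg_add_smul hx0 hsupp)
  have hmem : ∀ t : ℝ, |t| < ε → x + t • d ∈ {x | M *ᵥ x = b ∧ 0 ≤ x} := fun t ht =>
    ⟨by rw [mulVec_add, mulVec_smul, hd, smul_zero, add_zero, hxb], hball (by simpa using ht)⟩
  have hseg : x ∈ openSegment ℝ (x + (ε / 2) • d) (x + (-(ε / 2)) • d) :=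
    ⟨1 / 2, 1 / 2, by norm_num, by norm_num, by norm_num, by module⟩
  have hleft : x + (ε / 2) • d = x :=
    hext (hmem _ (by rw [abs_of_pos (by positivity)]; linarith))
      (hmem _ (by rw [abs_neg, abs_of_pos (by positivity)]; linarith)) hseg
  simpa [hε.ne'] using hleft

theorem linearIndepOn_col_of_mem_extremePoints
    (hx : x ∈ {x | M *ᵥ x = b ∧ 0 ≤ x}.extremePoints ℝ) :
    LinearIndepOn ℝ M.col {j | x j ≠ 0} := by
  rw [linearIndepOn_iff]
  intro l hl hcomb
  rw [linearCombination_col_eq_mulVec] at hcomb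
  refine DFunLike.coe_injective (eq_zero_of_mulVec_eq_zero_of_mem_extremePoints hx hcomb ?_)
  exact fun j hj => (Finsupp.mem_supported' ℝ l).1 hl j (by simpa using hj)

end Polyhedron

theorem exists_isUnit_submatrix_of_linearIndependent_col {m ι K : Type*} [Fintype m]
    [Fintype ι] [DecidableEq ι] [Field K] {A : Matrix m ι K} (hA : LinearIndependent K A.col) :
    ∃ r : ι → m, IsUnit (A.submatrix r id) := by
  obtain ⟨κ, a, ha, hspan, hli⟩ := exists_linearIndependent' K A.row
  have : Finite κ := Finite.of_injective a ha
  have : Fintype κ := Fintype.ofFinite κ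
  have hcard : Fintype.card ι = Fintype.card κ := by
    rw [← hA.rank_matrix, rank_transpose, rank_eq_finrank_span_row, ← hspan,
      finrank_span_eq_card hli]
  let e : ι ≃ κ := Fintype.equivOfCardEq hcard
  exact ⟨a ∘ e, linearIndependent_rows_iff_isUnit.1 (hli.comp e e.injective)⟩

theorem submatrix_mulVec_comp_coe {l m n R : Type*} [Fintype n] [NonUnitalNonAssocSemiring R]
    (M : Matrix m n R) (r : l → m) {s : Set n} [DecidablePred (· ∈ s)] {x : n → R}
    (hx : ∀ j ∉ s, x j = 0) :
    M.submatrix r ((↑) : s → n) *ᵥ (x ∘ (↑)) = fun i => (M *ᵥ x) (r i) := by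
  ext i
  have hout : ∑ j : {j // j ∉ s}, M (r i) j * x j = 0 :=
    Fintype.sum_eq_zero _ fun j => by rw [hx j j.2, mul_zero]
  simp only [mulVec, dotProduct, submatrix_apply, Function.comp_apply]
  rw [← Fintype.sum_subtype_add_sum_subtype (· ∈ s), hout, add_zero]

variable {ι : Type*} [Fintype ι] [DecidableEq ι]

theorem exists_det_eq_intCast {R : Type*} [CommRing R] {A : Matrix ι ι R}
    (hA : ∀ i j, ∃ k : ℤ, A i j = k) : ∃ k : ℤ, A.det = k := by
  choose A' hA' using hA
  refine ⟨(of A').det, ?_⟩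
  rw [← eq_intCast (Int.castRingHom R), RingHom.map_det]
  congr
  ext i j
  simp [hA']

theorem exists_intCast_of_mulVec_eq {K : Type*} [Field K] [LinearOrder K]
    [IsStrictOrderedRing K] {Q : Matrix ι ι K} (hQ : ∀ i j, ∃ k : ℤ, Q i j = k)
    (hdet : |Q.det| = 1) {c y : ι → K} (hc : ∀ i, ∃ k : ℤ, c i = k) (hy : Q *ᵥ y = c) (i : ι) :
    ∃ k : ℤ, y i = k := by
  have hdet_sq : Q.det * Q.det = 1 := by rw [← abs_mul_abs_self, hdet, one_mul]
  have hinj : Function.Injective Q.mulVec :=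
    mulVec_injective_iff_isUnit.2 <| (isUnit_iff_isUnit_det Q).2 <| .of_mul_eq_one _ hdet_sq
  have hcramer : cramer Q c = Q.det • y := hinj <| by rw [mulVec_cramer, mulVec_smul, hy]
  obtain ⟨d, hd⟩ := exists_det_eq_intCast hQ
  obtain ⟨k, hk⟩ := exists_det_eq_intCast (A := Q.updateCol i c) fun i' j => by
    rcases eq_or_ne j i with rfl | hj
    · simpa using hc i'
    · simpa [hj] using hQ i' j
  refine ⟨d * k, ?_⟩
  calc y i = Q.det * (Q.det * y i) := by rw [← mul_assoc, hdet_sq, one_mul]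
    _ = d * k := by rw [← hd, ← hk, ← cramer_apply, hcramer, Pi.smul_apply, smul_eq_mul]
    _ = (d * k : ℤ) := by push_cast; rfl

theorem IsTotallyUnimodular.exists_intCast_eq {m n R : Type*} [CommRing R] {A : Matrix m n R}
    (hA : A.IsTotallyUnimodular) (i : m) (j : n) : ∃ k : ℤ, A i j = k := by
  obtain ⟨σ, hσ⟩ := hA.apply i j
  exact ⟨σ, by rw [← hσ]; cases σ <;> simp⟩

theorem IsTotallyUnimodular.abs_det_eq_one {R : Type*} [CommRing R] [LinearOrder R]
    [IsStrictOrderedRing R] {A : Matrix ι ι R} (hA : A.IsTotallyUnimodular) (h : IsUnit A) :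
    |A.det| = 1 := by
  obtain ⟨σ, hσ⟩ := (isTotallyUnimodular_iff_fintype A).1 hA ι id id
  rw [submatrix_id_id] at hσ
  rw [isUnit_iff_isUnit_det, ← hσ] at h
  rw [← hσ]
  cases σ <;> simp at h ⊢

end Matrix

/-- If `M` is totally unimodular and `b` is an integer vector, then every vertex
(extreme point) of the polyhedron `P = {x : Mx = b, x ≥ 0}` has all integer
coordinates.  A vertex is a point of `P` that is not a proper convex combination of
two distinct points of `P`. -/
theorem TU_polyhedron_vertices_integral {m n : Type*} [Fintype m] [Fintype n]
    (M : Matrix m n ℝ) (hM : M.IsTotallyUnimodular)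
    (b : m → ℝ) (hb : ∀ i, ∃ z : ℤ, b i = z)
    (P : Set (n → ℝ)) (hP : P = {x | M.mulVec x = b ∧ ∀ j, 0 ≤ x j})
    (x : n → ℝ) (hx : x ∈ P)
    (hvertex : ∀ y ∈ P, ∀ z ∈ P, ∀ θ : ℝ, θ ∈ Set.Ioo (0:ℝ) 1 →
      x = θ • y + (1 - θ) • z → y = z) :
    ∀ j, ∃ k : ℤ, x j = k := by
  classical
  subst hP
  set S : Set n := {j | x j ≠ 0}
  obtain ⟨r, hr⟩ := exists_isUnit_submatrix_of_linearIndependent_col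
    (A := M.submatrix id ((↑) : S → n))
    (linearIndepOn_col_of_mem_extremePoints (mem_extremePoints_of_forall_eq hx hvertex))
  simp only [submatrix_submatrix, Function.id_comp, Function.comp_id] at hr
  have hsys : M.submatrix r (↑) *ᵥ (x ∘ ((↑) : S → n)) = fun s => b (r s) := by
    rw [submatrix_mulVec_comp_coe M r (s := S) fun j hj => not_not.1 hj, hx.1]
  intro j
  by_cases hj : x j = 0
  · exact ⟨0, by simp [hj]⟩
  · exact exists_intCast_of_mulVec_eq (hM.submatrix r (↑)).exists_intCast_eq
      ((hM.submatrix r (↑)).abs_det_eq_one hr) (fun s => hb (r s)) hsys ⟨j, hj⟩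
end

section
/- The tracking polytope equals the convex hull of characteristic vectors of track partitions: P = {(f,g,h) ∈ ℝ_{≥0}^{|A|+2|V|} : ∀v, g(v) + f(δ⁻(v)) = 1, h(v) + f(δ⁺(v)) = 1} is exactly the convex hull of the {0,1}-vectors corresponding to track partitions of V. -/
open Classical

/-- A track partition of a finite timestamped point set `V`: a collection of
vertex-disjoint, time-increasing, simple directed paths (nonempty lists) covering `V`. -/
structure TrackPartition (V : Type*) [Fintype V] (t : V → ℝ) where
  paths : Finset (List V)
  nonempty : ∀ p ∈ paths, p ≠ []
  nodup : ∀ p ∈ paths, p.Nodup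
  increasing : ∀ p ∈ paths, p.Chain' (fun u v => t u < t v)
  cover : ∀ v : V, ∃ p ∈ paths, v ∈ p
  disjoint : ∀ p ∈ paths, ∀ q ∈ paths, p ≠ q → ∀ v, v ∈ p → v ∉ q

variable {V : Type*} [Fintype V] {t : V → ℝ}

/-- `u` and `w` are consecutive entries (in this order) of the list `p`. -/
def consecIn (p : List V) (u w : V) : Prop :=
  ∃ i : ℕ, p[i]? = some u ∧ p[i + 1]? = some w

/-- Characteristic vector of the arcs used by a track partition. -/
noncomputable def charF (T : TrackPartition V t) (u w : V) : ℝ :=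
  if ∃ p ∈ T.paths, consecIn p u w then 1 else 0

/-- Characteristic vector of the starting points of a track partition. -/
noncomputable def charG (T : TrackPartition V t) (v : V) : ℝ :=
  if ∃ p ∈ T.paths, p.head? = some v then 1 else 0

/-- Characteristic vector of the ending points of a track partition. -/
noncomputable def charH (T : TrackPartition V t) (v : V) : ℝ :=
  if ∃ p ∈ T.paths, p.getLast? = some v then 1 else 0

/-!
A point `(f, g, h)` of the polytope gives the matrix `[[f, diag h], [diag g, fᵀ]]` on `V ⊕ V`;
its row and column sums are one exactly by the two families of equations, so it is doubly
stochastic. By Birkhoff–von Neumann it is a convex combination of permutation matrices, and every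
permutation `σ` of positive weight only hits nonzero entries: `σ (inl u) = inl v` forces
`t u < t v`, `σ (inl u)` lies in `inl V ∪ {inr u}`, and `σ (inr v)` lies in `{inl v} ∪ inr V`.
So `u ↦ σ (inl u)`, read on the left copy, is an injective time-increasing partial successor map;
its orbits from the vertices without predecessor form a track partition whose characteristic
vector is the corresponding part of the permutation matrix.

Conversely the polytope is convex, and it contains every characteristic vector because in a track
partition each vertex either starts its path or has exactly one predecessor, and either ends it
or has exactly one successor.
-/

open Finset Relation Matrix

theorem consecIn_iff_infix {α : Type*} {p : List α} {u w : α} :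
    consecIn p u w ↔ [u, w] <:+: p := by
  rw [List.infix_iff_getElem?]
  constructor
  · rintro ⟨i, hu, hw⟩
    refine ⟨i, ?_, fun j hj => ?_⟩
    · have := (List.getElem?_eq_some_iff.mp hw).1
      simp only [List.length_cons, List.length_nil]
      omega
    · match j, hj with
      | 0, _ => simpa using hu
      | 1, _ => simpa [add_comm] using hw
  · rintro ⟨i, -, h⟩
    exact ⟨i, by simpa using h 0 (by simp), by simpa [add_comm] using h 1 (by simp)⟩

theorem List.Nodup.exists_pred {α : Type*} {p : List α} (hp : p.Nodup) {v : α} (hv : v ∈ p) :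
    ∃ o : Option α, (p.head? = some v ↔ o = none) ∧ ∀ u, ([u, v] <:+: p ↔ o = some u) := by
  induction p with
  | nil => simp at hv
  | cons a l ih =>
    rw [List.nodup_cons] at hp
    simp only [List.infix_cons_iff, List.cons_prefix_cons, List.head?_cons, Option.some.injEq,
      List.singleton_prefix_iff_head?_eq_some]
    by_cases hva : v = a
    · subst hva
      refine ⟨none, by simp, fun u => ?_⟩
      simp only [reduceCtorEq, iff_false, not_or]
      exact ⟨fun h => hp.1 (List.mem_of_mem_head? h.2), fun h => hp.1 (h.subset (by simp))⟩
    · obtain ⟨o, hhead, hpred⟩ := ih hp.2 (by simpa [hva] using hv)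
      refine ⟨o.or (some a), by simp [Ne.symm hva], fun u => ?_⟩
      rw [hpred, hhead]
      cases o <;> simp [eq_comm]

theorem List.Nodup.exists_succ {α : Type*} {p : List α} (hp : p.Nodup) {v : α} (hv : v ∈ p) :
    ∃ o : Option α, (p.getLast? = some v ↔ o = none) ∧ ∀ w, ([v, w] <:+: p ↔ o = some w) := by
  obtain ⟨o, hlast, hsucc⟩ := (List.nodup_reverse.mpr hp).exists_pred (List.mem_reverse.mpr hv)
  refine ⟨o, by rwa [List.head?_reverse] at hlast, fun w => ?_⟩
  rw [← hsucc, ← List.reverse_infix]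
  rfl

theorem Option.ite_eq_none_add_sum_ite_eq_some {α R : Type*} [Fintype α]
    [AddCommMonoidWithOne R] (o : Option α) :
    (if o = none then 1 else 0) + ∑ a, (if o = some a then 1 else 0) = (1 : R) := by
  cases o <;> simp

theorem Relation.ReflTransGen.eq_of_leftUnique {α : Type*} {r : α → α → Prop}
    (hr : Relator.LeftUnique r) {a b c : α} (ha : ∀ x, ¬r x a) (hb : ∀ x, ¬r x b)
    (hac : ReflTransGen r a c) (hbc : ReflTransGen r b c) : a = b := by
  have eq_of_reach {a b : α} (hb : ∀ x, ¬r x b) (hab : ReflTransGen r a b) : a = b := by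
    rcases hab.cases_tail with rfl | ⟨x, -, hxb⟩
    · rfl
    · exact absurd hxb (hb x)
  rcases ReflTransGen.total_of_right_unique (r := Function.swap r) (fun _ _ _ h₁ h₂ => hr h₁ h₂)
    (reflTransGen_swap.mpr hac) (reflTransGen_swap.mpr hbc) with h | h
  · exact (eq_of_reach ha (reflTransGen_swap.mp h)).symm
  · exact eq_of_reach hb (reflTransGen_swap.mp h)

theorem WellFounded.exists_forall_not_rel_reflTransGen {α : Type*} {r : α → α → Prop}
    (hr : WellFounded r) (b : α) : ∃ a, (∀ x, ¬r x a) ∧ ReflTransGen r a b := by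
  induction b using hr.induction with
  | _ b ih =>
    by_cases h : ∃ x, r x b
    · obtain ⟨x, hxb⟩ := h
      obtain ⟨a, ha, hax⟩ := ih x hxb
      exact ⟨a, ha, hax.tail hxb⟩
    · exact ⟨b, not_exists.mp h, .refl⟩

section Successor

variable {α β : Type*} [Preorder β] {τ : α → β}

theorem wellFounded_of_forall_lt [Finite α] {r : α → α → Prop} (h : ∀ a b, r a b → τ a < τ b) :
    WellFounded r := by
  have : IsTrans α (τ · < τ ·) := ⟨fun _ _ _ => lt_trans⟩
  have : Std.Irrefl (τ · < τ ·) := ⟨fun a => lt_irrefl (τ a)⟩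
  exact Subrelation.wf (h _ _) (Finite.wellFounded_of_trans_of_irrefl _)

theorem card_filter_lt_lt_of_lt [Fintype α] {a b : α} (h : τ a < τ b) :
    #{c | τ b < τ c} < #{c | τ a < τ c} :=
  card_lt_card (ssubset_iff_of_subset (fun c hc => by simp_all [h.trans]) |>.mpr
    ⟨b, by simp [h]⟩)

noncomputable def pathFrom [Fintype α] (next : α → Option α)
    (hnext : ∀ a b, next a = some b → τ a < τ b) (a : α) : List α :=
  a :: match h : next a with
    | some b => pathFrom next hnext b
    | none => []
termination_by #{c | τ a < τ c}
decreasing_by exact card_filter_lt_lt_of_lt (hnext _ _ h)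

variable [Fintype α] {next : α → Option α} {hnext : ∀ a b, next a = some b → τ a < τ b}

theorem pathFrom_of_none {a : α} (h : next a = none) : pathFrom next hnext a = [a] := by
  rw [pathFrom]; split <;> simp_all

theorem pathFrom_of_some {a b : α} (h : next a = some b) :
    pathFrom next hnext a = a :: pathFrom next hnext b := by
  rw [pathFrom]; split <;> simp_all

theorem head?_pathFrom (a : α) : (pathFrom next hnext a).head? = some a := by
  rw [pathFrom]; rfl

theorem isChain_pathFrom (a : α) :
    (pathFrom next hnext a).IsChain (fun a b => next a = some b) := by
  induction a using pathFrom.induct next hnext with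
  | _ a ih =>
    cases h : next a with
    | none => simp [pathFrom_of_none h]
    | some b =>
      rw [pathFrom_of_some h, List.isChain_cons]
      exact ⟨fun c hc => by simp_all [head?_pathFrom], ih b h⟩

theorem nodup_pathFrom (a : α) : (pathFrom next hnext a).Nodup := by
  have : IsTrans α (τ · < τ ·) := ⟨fun _ _ _ => lt_trans⟩
  exact (List.isChain_iff_pairwise.mp ((isChain_pathFrom a).imp fun b c => hnext b c)).imp
    fun {b c} (h : τ b < τ c) => ne_of_apply_ne τ h.ne

theorem mem_pathFrom {a b : α} :
    b ∈ pathFrom next hnext a ↔ ReflTransGen (fun a b => next a = some b) a b := by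
  induction a using pathFrom.induct next hnext with
  | _ a ih =>
    rw [ReflTransGen.cases_head_iff]
    cases h : next a with
    | none => simp [pathFrom_of_none h, eq_comm]
    | some c => simp [pathFrom_of_some h, ih c h, eq_comm]

theorem getLast?_pathFrom {a b : α} :
    (pathFrom next hnext a).getLast? = some b ↔ b ∈ pathFrom next hnext a ∧ next b = none := by
  induction a using pathFrom.induct next hnext with
  | _ a ih =>
    cases h : next a with
    | none =>
      simp only [pathFrom_of_none h, List.getLast?_singleton, Option.some.injEq,
        List.mem_singleton, eq_comm]
      exact ⟨fun hb => ⟨hb, hb ▸ h⟩, And.left⟩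
    | some c =>
      rw [pathFrom_of_some h, List.getLast?_cons_of_ne_nil (by rw [pathFrom]; simp), ih c h,
        List.mem_cons]
      grind

theorem infix_pathFrom {a b c : α} :
    [b, c] <:+: pathFrom next hnext a ↔ b ∈ pathFrom next hnext a ∧ next b = some c := by
  induction a using pathFrom.induct next hnext with
  | _ a ih =>
    cases h : next a with
    | none =>
      have : ¬[b, c] <:+: [a] := fun hi => by simpa using hi.length_le
      simp only [pathFrom_of_none h, List.mem_singleton, this, false_iff, not_and]
      rintro rfl
      simp [h]
    | some d =>
      simp only [pathFrom_of_some h, List.infix_cons_iff, List.cons_prefix_cons,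
        List.singleton_prefix_iff_head?_eq_some, head?_pathFrom, ih d h, List.mem_cons]
      grind

end Successor

section Birkhoff

variable {n R : Type*}

theorem fromBlocks_mem_doublyStochastic [Fintype n] [DecidableEq n] [Semiring R] [PartialOrder R]
    [IsOrderedRing R] {A : Matrix n n R} {g h : n → R} (hA : ∀ i j, 0 ≤ A i j)
    (hg : ∀ i, 0 ≤ g i) (hh : ∀ i, 0 ≤ h i) (hcol : ∀ j, g j + ∑ i, A i j = 1)
    (hrow : ∀ i, h i + ∑ j, A i j = 1) :
    fromBlocks A (diagonal h) (diagonal g) Aᵀ ∈ doublyStochastic R (n ⊕ n) := by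
  rw [mem_doublyStochastic_iff_sum]
  refine ⟨?_, ?_, ?_⟩
  · rintro (i | i) (j | j) <;> simp only [fromBlocks_apply₁₁, fromBlocks_apply₁₂,
      fromBlocks_apply₂₁, fromBlocks_apply₂₂, diagonal_apply, transpose_apply]
    all_goals first | exact hA _ _ | split_ifs <;> simp [hg, hh]
  · rintro (i | i)
    · simpa [Fintype.sum_sum_type, diagonal_apply, add_comm] using hrow i
    · simpa [Fintype.sum_sum_type, diagonal_apply, add_comm] using hcol i
  · rintro (j | j)
    · simpa [Fintype.sum_sum_type, diagonal_apply, add_comm] using hcol j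
    · simpa [Fintype.sum_sum_type, diagonal_apply, add_comm] using hrow j

def trackVector [Semiring R] :
    Matrix (n ⊕ n) (n ⊕ n) R →ₗ[R] (n → n → R) × (n → R) × (n → R) where
  toFun M := (M.toBlocks₁₁, M.toBlocks₂₁.diag, M.toBlocks₁₂.diag)
  map_add' _ _ := rfl
  map_smul' _ _ := rfl

theorem trackVector_apply [Semiring R] (M : Matrix (n ⊕ n) (n ⊕ n) R) :
    trackVector M = (M.toBlocks₁₁, M.toBlocks₂₁.diag, M.toBlocks₁₂.diag) :=
  rfl

def trackMatrix [DecidableEq n] [Zero R] (x : (n → n → R) × (n → R) × (n → R)) :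
    Matrix (n ⊕ n) (n ⊕ n) R :=
  fromBlocks (of x.1) (diagonal x.2.2) (diagonal x.2.1) (of x.1)ᵀ

theorem trackVector_trackMatrix [DecidableEq n] [Semiring R]
    (x : (n → n → R) × (n → R) × (n → R)) : trackVector (trackMatrix x) = x := by
  rw [trackVector_apply, trackMatrix, toBlocks_fromBlocks₁₁, toBlocks_fromBlocks₂₁,
    toBlocks_fromBlocks₁₂, diag_diagonal, diag_diagonal]
  rfl

theorem trackVector_permMatrix [DecidableEq n] [Semiring R] (σ : Equiv.Perm (n ⊕ n)) :
    trackVector (σ.permMatrix R) =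
      (fun u v => if σ (.inl u) = .inl v then 1 else 0,
        fun v => if σ (.inr v) = .inl v then 1 else 0,
        fun v => if σ (.inl v) = .inr v then 1 else 0) := by
  ext <;> simp [trackVector_apply, toBlocks₁₁, toBlocks₁₂, toBlocks₂₁, PEquiv.toMatrix_apply]

theorem sum_smul_permMatrix_apply_pos [Fintype n] [DecidableEq n] [Semiring R] [PartialOrder R]
    [IsOrderedRing R] {w : Equiv.Perm n → R} (hw : ∀ τ, 0 ≤ w τ) {σ : Equiv.Perm n}
    (hσ : w σ ≠ 0) (i : n) : 0 < (∑ τ, w τ • τ.permMatrix R) i (σ i) := by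
  have hentry (τ : Equiv.Perm n) : 0 ≤ w τ • τ.permMatrix R i (σ i) :=
    smul_nonneg (hw τ) (by simp only [PEquiv.toMatrix_apply]; split_ifs <;> simp)
  calc 0 < w σ := (hw σ).lt_of_ne' hσ
    _ = w σ • σ.permMatrix R i (σ i) := by simp [PEquiv.toMatrix_apply]
    _ ≤ ∑ τ, w τ • τ.permMatrix R i (σ i) :=
      single_le_sum (f := fun τ => w τ • τ.permMatrix R i (σ i)) (fun τ _ => hentry τ)
        (mem_univ σ)
    _ = (∑ τ, w τ • τ.permMatrix R) i (σ i) := by simp [Matrix.sum_apply]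

end Birkhoff

namespace TrackPartition

variable (T : TrackPartition V t)

theorem exists_mem_paths_iff_of_mem {p : List V} (hp : p ∈ T.paths) {v : V} (hv : v ∈ p)
    (P : List V → Prop) (hP : ∀ q, P q → v ∈ q) : (∃ q ∈ T.paths, P q) ↔ P p := by
  refine ⟨fun ⟨q, hq, hPq⟩ => ?_, fun h => ⟨p, hp, h⟩⟩
  by_cases hqp : q = p
  · exact hqp ▸ hPq
  · exact absurd hv (T.disjoint q hq p hp hqp v (hP q hPq))

theorem exists_mem_paths_iff_of_forall {v : V} {P : List V → Prop} {Q : Prop}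
    (h : ∀ p ∈ T.paths, P p ↔ v ∈ p ∧ Q) : (∃ p ∈ T.paths, P p) ↔ Q := by
  refine ⟨fun ⟨p, hp, hPp⟩ => ((h p hp).mp hPp).2, fun hQ => ?_⟩
  obtain ⟨p, hp, hv⟩ := T.cover v
  exact ⟨p, hp, (h p hp).mpr ⟨hv, hQ⟩⟩

theorem charG_add_sum_charF (v : V) : charG T v + ∑ u, charF T u v = 1 := by
  obtain ⟨p, hp, hv⟩ := T.cover v
  obtain ⟨o, hhead, hpred⟩ := (T.nodup p hp).exists_pred hv
  have hG : charG T v = if o = none then 1 else 0 := by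
    simp only [charG, hhead,
      T.exists_mem_paths_iff_of_mem hp hv (·.head? = some v) fun q => List.mem_of_mem_head?]
  have hF (u : V) : charF T u v = if o = some u then 1 else 0 := by
    simp only [charF, consecIn_iff_infix,
      T.exists_mem_paths_iff_of_mem hp hv ([u, v] <:+: ·) fun q h => h.subset (by simp), hpred]
  simp only [hG, hF, Option.ite_eq_none_add_sum_ite_eq_some]

theorem charH_add_sum_charF (v : V) : charH T v + ∑ w, charF T v w = 1 := by
  obtain ⟨p, hp, hv⟩ := T.cover v
  obtain ⟨o, hlast, hsucc⟩ := (T.nodup p hp).exists_succ hv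
  have hH : charH T v = if o = none then 1 else 0 := by
    simp only [charH, hlast,
      T.exists_mem_paths_iff_of_mem hp hv (·.getLast? = some v) fun q => List.mem_of_getLast?]
  have hF (w : V) : charF T v w = if o = some w then 1 else 0 := by
    simp only [charF, consecIn_iff_infix,
      T.exists_mem_paths_iff_of_mem hp hv ([v, w] <:+: ·) fun q h => h.subset (by simp), hsucc]
  simp only [hH, hF, Option.ite_eq_none_add_sum_ite_eq_some]

theorem lt_of_charF_ne_zero {u w : V} (h : charF T u w ≠ 0) : t u < t w := by
  obtain ⟨p, hp, hpuw⟩ : ∃ p ∈ T.paths, consecIn p u w := by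
    by_contra hno
    exact h (if_neg hno)
  exact (List.isChain_pair (R := (t · < t ·))).mp
    ((T.increasing p hp).infix (consecIn_iff_infix.mp hpuw))

variable {next : V → Option V} {hnext : ∀ u v, next u = some v → t u < t v}
  {hinj : Relator.LeftUnique fun u v => next u = some v}

noncomputable def ofNext (next : V → Option V) (hnext : ∀ u v, next u = some v → t u < t v)
    (hinj : Relator.LeftUnique fun u v => next u = some v) : TrackPartition V t where
  paths := ({v | ∀ u, next u ≠ some v} : Finset V).image (pathFrom next hnext)
  nonempty p hp := by
    obtain ⟨s, -, rfl⟩ := mem_image.mp hp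
    rw [pathFrom]
    exact List.cons_ne_nil _ _
  nodup p hp := by
    obtain ⟨s, -, rfl⟩ := mem_image.mp hp
    exact nodup_pathFrom s
  increasing p hp := by
    obtain ⟨s, -, rfl⟩ := mem_image.mp hp
    exact (isChain_pathFrom s).imp fun u v => hnext u v
  cover v := by
    obtain ⟨s, hs, hsv⟩ := (wellFounded_of_forall_lt hnext).exists_forall_not_rel_reflTransGen v
    exact ⟨pathFrom next hnext s, mem_image_of_mem _ (mem_filter.mpr ⟨mem_univ s, hs⟩),
      mem_pathFrom.mpr hsv⟩
  disjoint p hp q hq hpq v hvp hvq := by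
    obtain ⟨s, hs, rfl⟩ := mem_image.mp hp
    obtain ⟨s', hs', rfl⟩ := mem_image.mp hq
    simp only [mem_filter, mem_univ, true_and] at hs hs'
    exact hpq (congrArg _ (ReflTransGen.eq_of_leftUnique hinj hs hs' (mem_pathFrom.mp hvp)
      (mem_pathFrom.mp hvq)))

theorem mem_paths_ofNext {p : List V} :
    p ∈ (ofNext next hnext hinj).paths ↔
      ∃ s, (∀ u, next u ≠ some s) ∧ pathFrom next hnext s = p := by
  simp [ofNext]

theorem charF_ofNext (u w : V) :
    charF (ofNext next hnext hinj) u w = if next u = some w then 1 else 0 := by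
  have : (∃ p ∈ (ofNext next hnext hinj).paths, consecIn p u w) ↔ next u = some w :=
    exists_mem_paths_iff_of_forall _ fun p hp => by
      obtain ⟨s, -, rfl⟩ := mem_paths_ofNext.mp hp
      rw [consecIn_iff_infix, infix_pathFrom]
  simp only [charF, this]

theorem charH_ofNext (v : V) :
    charH (ofNext next hnext hinj) v = if next v = none then 1 else 0 := by
  have : (∃ p ∈ (ofNext next hnext hinj).paths, p.getLast? = some v) ↔ next v = none :=
    exists_mem_paths_iff_of_forall _ fun p hp => by
      obtain ⟨s, -, rfl⟩ := mem_paths_ofNext.mp hp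
      rw [getLast?_pathFrom]
  simp only [charH, this]

theorem charG_ofNext (v : V) :
    charG (ofNext next hnext hinj) v = if ∀ u, next u ≠ some v then 1 else 0 := by
  have : (∃ p ∈ (ofNext next hnext hinj).paths, p.head? = some v) ↔ ∀ u, next u ≠ some v := by
    refine ⟨fun ⟨p, hp, hpv⟩ => ?_,
      fun hv => ⟨_, mem_paths_ofNext.mpr ⟨v, hv, rfl⟩, head?_pathFrom v⟩⟩
    obtain ⟨s, hs, rfl⟩ := mem_paths_ofNext.mp hp
    rw [head?_pathFrom, Option.some_inj] at hpv
    exact hpv ▸ hs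
  simp only [charG, this]

end TrackPartition

def trackingPolytope (t : V → ℝ) : Set ((V → V → ℝ) × (V → ℝ) × (V → ℝ)) :=
  {x | (∀ u w, 0 ≤ x.1 u w) ∧ (∀ v, 0 ≤ x.2.1 v) ∧ (∀ v, 0 ≤ x.2.2 v) ∧
    (∀ u w, x.1 u w ≠ 0 → t u < t w) ∧
    (∀ v, x.2.1 v + ∑ u, x.1 u v = 1) ∧
    (∀ v, x.2.2 v + ∑ w, x.1 v w = 1)}

theorem convex_trackingPolytope (t : V → ℝ) : Convex ℝ (trackingPolytope t) := by
  rintro x ⟨hf, hg, hh, ht, hin, hout⟩ y ⟨hf', hg', hh', ht', hin', hout'⟩ a b ha hb hab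
  simp only [trackingPolytope, Set.mem_ofPred_eq, Prod.fst_add, Prod.snd_add, Prod.smul_fst,
    Prod.smul_snd, Pi.add_apply, Pi.smul_apply, smul_eq_mul]
  refine ⟨fun u w => by have := hf u w; have := hf' u w; positivity,
    fun v => by have := hg v; have := hg' v; positivity,
    fun v => by have := hh v; have := hh' v; positivity, fun u w hne => ?_,
    fun v => ?_, fun v => ?_⟩
  · by_contra hlt
    rw [not_imp_comm.mp (ht u w) hlt, not_imp_comm.mp (ht' u w) hlt, mul_zero, mul_zero,
      add_zero] at hne
    exact hne rfl
  · rw [sum_add_distrib, ← mul_sum, ← mul_sum]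
    linear_combination a * hin v + b * hin' v + hab
  · rw [sum_add_distrib, ← mul_sum, ← mul_sum]
    linear_combination a * hout v + b * hout' v + hab

theorem TrackPartition.charVec_mem_trackingPolytope (T : TrackPartition V t) :
    (charF T, charG T, charH T) ∈ trackingPolytope t :=
  ⟨fun u w => by dsimp only; unfold charF; positivity,
    fun v => by dsimp only; unfold charG; positivity,
    fun v => by dsimp only; unfold charH; positivity,
    fun _ _ => T.lt_of_charF_ne_zero, T.charG_add_sum_charF, T.charH_add_sum_charF⟩

theorem exists_trackPartition_of_perm {σ : Equiv.Perm (V ⊕ V)}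
    (hlt : ∀ u v, σ (.inl u) = .inl v → t u < t v) (hout : ∀ u k, σ (.inl u) = .inr k → k = u)
    (hin : ∀ k v, σ (.inr k) = .inl v → k = v) :
    ∃ T : TrackPartition V t, trackVector (σ.permMatrix ℝ) = (charF T, charG T, charH T) := by
  set next : V → Option V := fun u => (σ (.inl u)).getLeft?
  have next_eq_some {u v : V} : next u = some v ↔ σ (.inl u) = .inl v := Sum.getLeft?_eq_some_iff
  have hinj : Relator.LeftUnique fun u v => next u = some v := fun a b c ha hb => by
    simpa using σ.injective ((next_eq_some.mp ha).trans (next_eq_some.mp hb).symm)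
  refine ⟨.ofNext next (fun u v h => hlt u v (next_eq_some.mp h)) hinj, ?_⟩
  rw [trackVector_permMatrix]
  refine Prod.ext (funext₂ fun u w => ?_) (Prod.ext (funext fun v => ?_) (funext fun v => ?_))
  · simp only [TrackPartition.charF_ofNext, next_eq_some]
  · dsimp only
    rw [TrackPartition.charG_ofNext]
    refine if_congr ⟨fun hv u hu => ?_, fun hv => ?_⟩ rfl rfl
    · simpa using σ.injective ((next_eq_some.mp hu).trans hv.symm)
    · rcases h : σ.symm (.inl v) with u | k
      · exact absurd (next_eq_some.mpr (σ.symm_apply_eq.mp h).symm) (hv u)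
      · have hk := (σ.symm_apply_eq.mp h).symm
        exact hin k v hk ▸ hk
  · dsimp only
    rw [TrackPartition.charH_ofNext]
    refine if_congr ⟨fun hv => by simp [next, hv], fun hv => ?_⟩ rfl rfl
    rcases h : σ (.inl v) with w | k
    · simp [next, h] at hv
    · rw [hout v k h]

theorem trackMatrix_mem_doublyStochastic {x : (V → V → ℝ) × (V → ℝ) × (V → ℝ)}
    (hx : x ∈ trackingPolytope t) : trackMatrix x ∈ doublyStochastic ℝ (V ⊕ V) :=
  fromBlocks_mem_doublyStochastic hx.1 hx.2.1 hx.2.2.1 hx.2.2.2.2.1 hx.2.2.2.2.2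

theorem exists_trackPartition_of_trackMatrix_apply_ne_zero
    {x : (V → V → ℝ) × (V → ℝ) × (V → ℝ)} (ht : ∀ u w, x.1 u w ≠ 0 → t u < t w)
    {σ : Equiv.Perm (V ⊕ V)} (hσ : ∀ i, trackMatrix x i (σ i) ≠ 0) :
    ∃ T : TrackPartition V t, trackVector (σ.permMatrix ℝ) = (charF T, charG T, charH T) :=
  exists_trackPartition_of_perm
    (fun u v h => ht u v (by simpa [trackMatrix, h] using hσ (.inl u)))
    (fun u k h => by_contra fun hku => hσ (.inl u)
      (by rw [trackMatrix, h, fromBlocks_apply₁₂, diagonal_apply_ne _ (Ne.symm hku)]))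
    (fun k v h => by_contra fun hkv => hσ (.inr k)
      (by rw [trackMatrix, h, fromBlocks_apply₂₁, diagonal_apply_ne _ hkv]))

theorem trackingPolytope_subset_convexHull :
    trackingPolytope t ⊆
      convexHull ℝ {x | ∃ T : TrackPartition V t, x = (charF T, charG T, charH T)} := by
  intro x hx
  obtain ⟨w, hw0, hw1, hwM⟩ :=
    exists_eq_sum_perm_of_mem_doublyStochastic (trackMatrix_mem_doublyStochastic hx)
  have hx_eq : x = ∑ σ with w σ ≠ 0, w σ • trackVector (σ.permMatrix ℝ) := by
    rw [sum_filter_of_ne fun σ _ h => left_ne_zero_of_smul h]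
    simp only [← map_smul, ← map_sum, hwM, trackVector_trackMatrix]
  rw [hx_eq]
  refine (convex_convexHull ℝ _).sum_mem (fun σ _ => hw0 σ) (by rw [sum_filter_ne_zero, hw1])
    fun σ hσ => subset_convexHull ℝ _ ?_
  obtain ⟨T, hT⟩ := exists_trackPartition_of_trackMatrix_apply_ne_zero hx.2.2.2.1
    fun i => hwM ▸ (sum_smul_permMatrix_apply_pos hw0 (mem_filter.mp hσ).2 i).ne'
  exact ⟨T, hT⟩

/-- The tracking polytope
`P = {(f,g,h) ≥ 0 : ∀v, g(v) + f(δ⁻(v)) = 1, h(v) + f(δ⁺(v)) = 1}` equals the convex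
hull of the characteristic vectors of track partitions of `V`. -/
theorem tracking_polytope_eq_convexHull_trackPartitions (t : V → ℝ) :
    {x : (V → V → ℝ) × (V → ℝ) × (V → ℝ) |
        (∀ u w, 0 ≤ x.1 u w) ∧ (∀ v, 0 ≤ x.2.1 v) ∧ (∀ v, 0 ≤ x.2.2 v) ∧
        (∀ u w, x.1 u w ≠ 0 → t u < t w) ∧
        (∀ v, x.2.1 v + ∑ u, x.1 u v = 1) ∧
        (∀ v, x.2.2 v + ∑ w, x.1 v w = 1)} =
      convexHull ℝ
        {x | ∃ T : TrackPartition V t, x = (charF T, charG T, charH T)} :=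
  trackingPolytope_subset_convexHull.antisymm <| convexHull_min
    (fun _ ⟨T, hT⟩ => hT ▸ T.charVec_mem_trackingPolytope) (convex_trackingPolytope t)
end
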